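/- If there exists an infinite rewrite sequence t = t0 →_P t1 →_P t2 →_P ... starting from the term t, then the needs graph of P contains a directed cycle having a vertex that is reachable by a directed path (possibly of length zero) from a vertex representing a function symbol or constant occurring in t. Equivalently (Proposition 2 of the paper, in contrapositive form): if no vertex lying on a cycle of the needs graph of P is reachable from any symbol occurring in t, then every rewrite sequence starting from t is finite, i.e., t is strongly normalizing with respect to P. -/

import Mathlib

/-- First-order terms over a signature `σ` (function symbols and constants,
where constants are symbols applied to the empty argument list) and
variables `ν`. -/
inductive Term (σ ν : Type) : Type
  | var : ν → Term σ ν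
  | app : σ → List (Term σ ν) → Term σ ν

namespace Term

variable {σ ν : Type}

/-- Applying a substitution to a term. -/
def subst (θ : ν → Term σ ν) : Term σ ν → Term σ ν
  | .var v => θ v
  | .app f ts => .app f (ts.attach.map fun x => subst θ x.1)
  decreasing_by have := List.sizeOf_lt_of_mem x.2; simp at this ⊢; omega

/-- The set of function symbols and constants occurring in a term. -/
def symbols : Term σ ν → Set σ
  | .var _ => ∅
  | .app f ts => {f} ∪ (ts.attach.map fun x => symbols x.1).foldr (· ∪ ·) ∅
  decreasing_by have := List.sizeOf_lt_of_mem x.2; simp at this ⊢; omega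

/-- The set of variables occurring in a term. -/
def vars : Term σ ν → Set ν
  | .var v => {v}
  | .app _ ts => (ts.attach.map fun x => vars x.1).foldr (· ∪ ·) ∅
  decreasing_by have := List.sizeOf_lt_of_mem x.2; simp at this ⊢; omega

/-- The outermost (root) symbol of a term, if any. -/
def root : Term σ ν → Option σ
  | .var _ => none
  | .app f _ => some f

/-- `u.IsSubtermOf t` holds when `u` is a (not necessarily proper) subterm of `t`. -/
inductive IsSubtermOf : Term σ ν → Term σ ν → Prop
  | refl (t : Term σ ν) : IsSubtermOf t t
  | arg {u t : Term σ ν} {f : σ} {ts : List (Term σ ν)} :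
      t ∈ ts → IsSubtermOf u t → IsSubtermOf u (.app f ts)

end Term

/-- A rewrite rule `l → r`: `l` is not a variable and every variable of `r`
occurs in `l`. -/
structure Rule (σ ν : Type) where
  lhs : Term σ ν
  rhs : Term σ ν
  lhs_not_var : ∀ v, lhs ≠ .var v
  vars_subset : rhs.vars ⊆ lhs.vars

/-- A term rewriting system: a finite set (list) of rules. -/
structure TRS (σ ν : Type) where
  rules : List (Rule σ ν)

namespace TRS

variable {σ ν : Type}

/-- The one-step rewrite relation of `P`: replace an instance `lσ` of a
left-hand side, occurring as a subterm, by the corresponding instance `rσ`. -/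
inductive Rewrite (P : TRS σ ν) : Term σ ν → Term σ ν → Prop
  | root {ρ : Rule σ ν} (hρ : ρ ∈ P.rules) (θ : ν → Term σ ν) :
      Rewrite P (ρ.lhs.subst θ) (ρ.rhs.subst θ)
  | congr {s t : Term σ ν} (f : σ) (pre post : List (Term σ ν)) :
      Rewrite P s t →
      Rewrite P (.app f (pre ++ s :: post)) (.app f (pre ++ t :: post))

/-- A symbol is defined if it is the outermost symbol of the left-hand side
of some rule. -/
def Defined (P : TRS σ ν) (f : σ) : Prop :=
  ∃ ρ ∈ P.rules, ρ.lhs.root = some f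

/-- Edge `f ⟶ g` of the needs graph: `f` is the root (defined) symbol of the
left-hand side of some rule whose right-hand side contains `g`. -/
def NeedsEdge (P : TRS σ ν) (f g : σ) : Prop :=
  ∃ ρ ∈ P.rules, ρ.lhs.root = some f ∧ g ∈ ρ.rhs.symbols

/-- A term is in normal form if no subterm of it is an instance of the
left-hand side of a rule of `P`. -/
def NormalForm (P : TRS σ ν) (s : Term σ ν) : Prop :=
  ∀ u : Term σ ν, u.IsSubtermOf s → ∀ ρ ∈ P.rules, ∀ θ : ν → Term σ ν, u ≠ ρ.lhs.subst θ

end TRS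


/-! Assume that no cycle of the needs graph is reachable from a symbol of `t`. A rewrite step
only creates symbols needed by symbols already present, so every symbol along the sequence is
reachable from `t`, and below each of them the needs graph is acyclic; in particular the rank
of a symbol, the number of symbols strictly below it, drops along every edge out of it.

Interpret terms in `ℕ` by `[f(t₁, …, tₖ)] = w f * (1 + [t₁] + ⋯ + [tₖ])`, variables counting
as `1`. This is strictly
monotone in each argument, and `[r θ] ≤ [r] * L` as soon as all variables of `r` take values
at most `L`. For a left-hand side `l = f(l₁, …, lₖ)` take `L = 1 + [l₁ θ] + ⋯ + [lₖ θ]`, so that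
`[l θ] = w f * L`: a root step decreases the interpretation as soon as `[r] < w f`. Weights with
this property exist when they grow fast enough with the rank, and then the infinite sequence
yields an infinite descending chain in `ℕ`. -/

theorem List.mem_foldr_union {α : Type*} {a : α} {L : List (Set α)} :
    a ∈ L.foldr (· ∪ ·) ∅ ↔ ∃ s ∈ L, a ∈ s := by
  induction L <;> simp_all

namespace Term

variable {σ ν : Type}

theorem ind {motive : Term σ ν → Prop} (var : ∀ v, motive (.var v))
    (app : ∀ f ts, (∀ u ∈ ts, motive u) → motive (.app f ts)) : ∀ u, motive u
  | .var v => var v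
  | .app f ts => app f ts fun u _ => ind var app u

theorem subst_app (θ : ν → Term σ ν) (f : σ) (ts : List (Term σ ν)) :
    (app f ts).subst θ = app f (ts.map (·.subst θ)) := by
  simp [subst]

@[simp]
theorem symbols_var (v : ν) : (var v : Term σ ν).symbols = ∅ := by
  simp [symbols]

theorem mem_symbols_app {g f : σ} {ts : List (Term σ ν)} :
    g ∈ (app f ts).symbols ↔ g = f ∨ ∃ u ∈ ts, g ∈ u.symbols := by
  simp [symbols, List.mem_foldr_union]

@[simp]
theorem vars_var (v : ν) : (var v : Term σ ν).vars = {v} := by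
  simp [vars]

theorem mem_vars_app {v : ν} {f : σ} {ts : List (Term σ ν)} :
    v ∈ (app f ts).vars ↔ ∃ u ∈ ts, v ∈ u.vars := by
  simp [vars, List.mem_foldr_union]

theorem exists_eq_app_of_root_eq_some {t : Term σ ν} {f : σ} (h : t.root = some f) :
    ∃ ts, t = app f ts := by
  cases t with
  | var v => cases h
  | app g ts => cases h; exact ⟨ts, rfl⟩

theorem symbols_subset_symbols_app {f : σ} {ts : List (Term σ ν)} {u : Term σ ν}
    (hu : u ∈ ts) : u.symbols ⊆ (app f ts).symbols :=
  fun _ hg => mem_symbols_app.2 (Or.inr ⟨u, hu, hg⟩)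

theorem mem_symbols_subst_of_root {θ : ν → Term σ ν} {t : Term σ ν} {f : σ}
    (h : t.root = some f) : f ∈ (t.subst θ).symbols := by
  obtain ⟨ts, rfl⟩ := exists_eq_app_of_root_eq_some h
  rw [subst_app]
  exact mem_symbols_app.2 (Or.inl rfl)

theorem finite_symbols (u : Term σ ν) : u.symbols.Finite := by
  induction u using Term.ind with
  | var v => simp
  | app f ts ih =>
    refine ((Set.finite_singleton f).union (ts.finite_toSet.biUnion ih)).subset fun g hg => ?_
    rcases mem_symbols_app.1 hg with rfl | ⟨u, hu, hg⟩
    · exact Or.inl rfl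
    · exact Or.inr (Set.mem_biUnion hu hg)

theorem mem_symbols_subst {θ : ν → Term σ ν} {g : σ} {u : Term σ ν}
    (hg : g ∈ (u.subst θ).symbols) : g ∈ u.symbols ∨ ∃ v ∈ u.vars, g ∈ (θ v).symbols := by
  induction u using Term.ind with
  | var v => exact Or.inr ⟨v, by simp, by simpa [subst] using hg⟩
  | app f ts ih =>
    rw [subst_app, mem_symbols_app] at hg
    rcases hg with rfl | ⟨_, hmem, hg⟩
    · exact Or.inl (mem_symbols_app.2 (Or.inl rfl))
    obtain ⟨u, hu, rfl⟩ := List.mem_map.1 hmem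
    rcases ih u hu hg with hg | ⟨v, hv, hg⟩
    · exact Or.inl (symbols_subset_symbols_app hu hg)
    · exact Or.inr ⟨v, mem_vars_app.2 ⟨u, hu, hv⟩, hg⟩

theorem symbols_subset_symbols_subst {θ : ν → Term σ ν} {v : ν} {u : Term σ ν}
    (hv : v ∈ u.vars) : (θ v).symbols ⊆ (u.subst θ).symbols := by
  induction u using Term.ind with
  | var w =>
    obtain rfl : v = w := by simpa using hv
    simp [subst]
  | app f ts ih =>
    obtain ⟨u, hu, hv⟩ := mem_vars_app.1 hv
    rw [subst_app]
    exact (ih u hu hv).trans (symbols_subset_symbols_app (List.mem_map_of_mem hu))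

def eval (w : σ → ℕ) : Term σ ν → ℕ
  | .var _ => 1
  | .app f ts => w f * (1 + (ts.map (eval w)).sum)

section eval

variable {w : σ → ℕ}

theorem eval_mono {w' : σ → ℕ} {u : Term σ ν} (h : ∀ g ∈ u.symbols, w g ≤ w' g) :
    u.eval w ≤ u.eval w' := by
  induction u using Term.ind with
  | var v => simp [eval]
  | app f ts ih =>
    rw [eval, eval]
    gcongr
    · exact h f (mem_symbols_app.2 (Or.inl rfl))
    · exact List.sum_le_sum fun u hu =>
        ih u hu fun g hg => h g (symbols_subset_symbols_app hu hg)

theorem eval_le_eval_subst (hw : ∀ g, 1 ≤ w g) {θ : ν → Term σ ν} {v : ν} {u : Term σ ν}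
    (hv : v ∈ u.vars) : (θ v).eval w ≤ (u.subst θ).eval w := by
  induction u using Term.ind with
  | var x =>
    obtain rfl : v = x := by simpa using hv
    simp [subst]
  | app f ts ih =>
    obtain ⟨u, hu, hv⟩ := mem_vars_app.1 hv
    rw [subst_app, eval, List.map_map]
    calc (θ v).eval w ≤ (u.subst θ).eval w := ih u hu hv
      _ ≤ (ts.map (eval w ∘ (·.subst θ))).sum := List.le_sum_of_mem (List.mem_map_of_mem hu)
      _ ≤ 1 * (1 + (ts.map (eval w ∘ (·.subst θ))).sum) := by omega
      _ ≤ w f * (1 + (ts.map (eval w ∘ (·.subst θ))).sum) := by gcongr; exact hw f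

theorem eval_subst_le {θ : ν → Term σ ν} {L : ℕ} (hL : 1 ≤ L) {u : Term σ ν}
    (h : ∀ v ∈ u.vars, (θ v).eval w ≤ L) : (u.subst θ).eval w ≤ u.eval w * L := by
  induction u using Term.ind with
  | var v => simpa [subst, eval] using h v (by simp)
  | app f ts ih =>
    have hargs : (ts.map (eval w ∘ (·.subst θ))).sum ≤ (ts.map (eval w)).sum * L := by
      rw [← List.sum_map_mul_right]
      exact List.sum_le_sum fun u hu => ih u hu fun v hv => h v (mem_vars_app.2 ⟨u, hu, hv⟩)
    rw [subst_app, eval, eval, List.map_map]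
    calc w f * (1 + (ts.map (eval w ∘ (·.subst θ))).sum)
        ≤ w f * (L + (ts.map (eval w)).sum * L) := by gcongr
      _ = w f * (1 + (ts.map (eval w)).sum) * L := by ring

end eval

end Term

namespace Rule

variable {σ ν : Type}

open Term

theorem exists_root_lhs (ρ : Rule σ ν) : ∃ f, ρ.lhs.root = some f := by
  cases h : ρ.lhs with
  | var v => exact absurd h (ρ.lhs_not_var v)
  | app f _ => exact ⟨f, rfl⟩

theorem eval_subst_rhs_lt {w : σ → ℕ} (hw : ∀ g, 1 ≤ w g) (ρ : Rule σ ν) {f : σ}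
    (hf : ρ.lhs.root = some f) (hr : ρ.rhs.eval w < w f) (θ : ν → Term σ ν) :
    (ρ.rhs.subst θ).eval w < (ρ.lhs.subst θ).eval w := by
  obtain ⟨ls, hl⟩ := exists_eq_app_of_root_eq_some hf
  set L := 1 + (ls.map (eval w ∘ (·.subst θ))).sum
  have hvars : ∀ v ∈ ρ.rhs.vars, (θ v).eval w ≤ L := fun v hv => by
    obtain ⟨u, hu, hv⟩ := mem_vars_app.1 (hl ▸ ρ.vars_subset hv)
    calc (θ v).eval w ≤ (u.subst θ).eval w := eval_le_eval_subst hw hv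
      _ ≤ (ls.map (eval w ∘ (·.subst θ))).sum := List.le_sum_of_mem (List.mem_map_of_mem hu)
      _ ≤ L := by omega
  calc (ρ.rhs.subst θ).eval w ≤ ρ.rhs.eval w * L := eval_subst_le (by omega) hvars
    _ < w f * L := by gcongr
    _ = (ρ.lhs.subst θ).eval w := by rw [hl, subst_app, eval, List.map_map]

end Rule

namespace TRS

variable {σ ν : Type} {P : TRS σ ν}

open Term Relation

theorem Rewrite.exists_reflGen_of_mem_symbols {s u : Term σ ν} (h : P.Rewrite s u) {g : σ}
    (hg : g ∈ u.symbols) : ∃ a ∈ s.symbols, ReflGen P.NeedsEdge a g := by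
  induction h with
  | @root ρ hρ θ =>
    obtain ⟨f, hf⟩ := ρ.exists_root_lhs
    rcases mem_symbols_subst hg with hg | ⟨v, hv, hg⟩
    · exact ⟨f, mem_symbols_subst_of_root hf, .single ⟨ρ, hρ, hf, hg⟩⟩
    · exact ⟨g, symbols_subset_symbols_subst (ρ.vars_subset hv) hg, .refl⟩
  | @congr s t f pre post _ ih =>
    simp only [mem_symbols_app, List.mem_append, List.mem_cons] at hg
    rcases hg with rfl | ⟨u, hu | rfl | hu, hg⟩
    · exact ⟨g, mem_symbols_app.2 (Or.inl rfl), .refl⟩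
    · exact ⟨g, symbols_subset_symbols_app (by simp [hu]) hg, .refl⟩
    · obtain ⟨a, ha, hag⟩ := ih hg
      exact ⟨a, symbols_subset_symbols_app (by simp) ha, hag⟩
    · exact ⟨g, symbols_subset_symbols_app (by simp [hu]) hg, .refl⟩

theorem exists_reflTransGen_of_mem_symbols {s u : Term σ ν} (h : ReflTransGen P.Rewrite s u)
    {g : σ} (hg : g ∈ u.symbols) : ∃ a ∈ s.symbols, ReflTransGen P.NeedsEdge a g := by
  induction h generalizing g with
  | refl => exact ⟨g, hg, .refl⟩
  | tail _ hstep ih =>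
    obtain ⟨b, hb, hbg⟩ := hstep.exists_reflGen_of_mem_symbols hg
    obtain ⟨a, ha, hab⟩ := ih hb
    exact ⟨a, ha, hab.trans hbg.to_reflTransGen⟩

theorem Rewrite.eval_lt {w : σ → ℕ} (hw : ∀ g, 1 ≤ w g) {s u : Term σ ν} (h : P.Rewrite s u)
    (hdec : ∀ ρ ∈ P.rules, ∀ f ∈ s.symbols, ρ.lhs.root = some f → ρ.rhs.eval w < w f) :
    u.eval w < s.eval w := by
  induction h with
  | @root ρ hρ θ =>
    obtain ⟨f, hf⟩ := ρ.exists_root_lhs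
    exact ρ.eval_subst_rhs_lt hw hf (hdec ρ hρ f (mem_symbols_subst_of_root hf) hf) θ
  | @congr s t f pre post _ ih =>
    have hlt := ih fun ρ hρ g hg => hdec ρ hρ g (symbols_subset_symbols_app (by simp) hg)
    have hf := hw f
    simp only [eval, List.map_append, List.map_cons, List.sum_append, List.sum_cons]
    gcongr

theorem finite_setOf_transGen_needsEdge (P : TRS σ ν) (f : σ) :
    {g | TransGen P.NeedsEdge f g}.Finite := by
  refine (P.rules.finite_toSet.biUnion fun ρ _ => ρ.rhs.finite_symbols).subset fun g hg => ?_
  obtain ⟨_, _, ρ, hρ, _, hg⟩ := TransGen.tail'_iff.1 hg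
  exact Set.mem_biUnion hρ hg

noncomputable def rank (P : TRS σ ν) (f : σ) : ℕ :=
  {g | TransGen P.NeedsEdge f g}.ncard

theorem rank_lt_rank {f g : σ} (he : P.NeedsEdge f g) (hg : ¬ TransGen P.NeedsEdge g g) :
    P.rank g < P.rank f :=
  Set.ncard_lt_ncard ((Set.ssubset_iff_of_subset fun _ hx => .head he hx).2 ⟨g, .single he, hg⟩)
    (P.finite_setOf_transGen_needsEdge f)

def weightTower (P : TRS σ ν) : ℕ → ℕ
  | 0 => 1
  | n + 1 => weightTower P n + (P.rules.map fun ρ => ρ.rhs.eval fun _ => weightTower P n).sum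

theorem one_le_weightTower (n : ℕ) : 1 ≤ P.weightTower n := by
  induction n with
  | zero => rfl
  | succ n ih => rw [weightTower]; omega

theorem monotone_weightTower : Monotone P.weightTower :=
  monotone_nat_of_le_succ fun n => by rw [weightTower]; omega

theorem eval_rhs_lt_weightTower {ρ : Rule σ ν} (hρ : ρ ∈ P.rules) (n : ℕ) :
    ρ.rhs.eval (fun _ => P.weightTower n) < P.weightTower (n + 1) := by
  have hle := List.le_sum_of_mem
    (List.mem_map_of_mem (f := fun ρ : Rule σ ν => ρ.rhs.eval fun _ => P.weightTower n) hρ)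
  have hpos := P.one_le_weightTower n
  rw [weightTower]
  omega

noncomputable def weight (P : TRS σ ν) (f : σ) : ℕ :=
  P.weightTower (P.rank f + 1)

theorem one_le_weight (f : σ) : 1 ≤ P.weight f :=
  P.one_le_weightTower _

theorem eval_rhs_lt_weight {ρ : Rule σ ν} (hρ : ρ ∈ P.rules) {f : σ} (hf : ρ.lhs.root = some f)
    (hacyc : ∀ g ∈ ρ.rhs.symbols, ¬ TransGen P.NeedsEdge g g) :
    ρ.rhs.eval P.weight < P.weight f :=
  calc ρ.rhs.eval P.weight ≤ ρ.rhs.eval fun _ => P.weightTower (P.rank f) :=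
        eval_mono fun g hg => monotone_weightTower (rank_lt_rank ⟨ρ, hρ, hf, hg⟩ (hacyc g hg))
    _ < P.weight f := eval_rhs_lt_weightTower hρ _

end TRS

/-- **Proposition 2.** If there is an infinite rewrite sequence
starting from `t`, then the needs graph of `P` contains a directed cycle
having a vertex reachable by a directed path (possibly of length zero) from a
vertex representing a symbol occurring in `t`. -/
theorem infinite_rewrite_seq_implies_reachable_cycle {σ ν : Type} (P : TRS σ ν)
    (t : Term σ ν) (seq : ℕ → Term σ ν) (h0 : seq 0 = t)
    (hstep : ∀ n : ℕ, P.Rewrite (seq n) (seq (n + 1))) :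
    ∃ a ∈ t.symbols, ∃ f : σ,
      Relation.ReflTransGen P.NeedsEdge a f ∧ Relation.TransGen P.NeedsEdge f f := by
  by_contra! hacyc
  have hpath : ∀ n, Relation.ReflTransGen P.Rewrite t (seq n) := fun n => by
    induction n with
    | zero => exact h0 ▸ .refl
    | succ n ih => exact ih.tail (hstep n)
  have hdecr : ∀ n, (seq (n + 1)).eval P.weight < (seq n).eval P.weight := fun n =>
    (hstep n).eval_lt TRS.one_le_weight fun ρ hρ f hf hroot =>
      TRS.eval_rhs_lt_weight hρ hroot fun g hg => by
        obtain ⟨a, ha, haf⟩ := TRS.exists_reflTransGen_of_mem_symbols (hpath n) hf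
        exact hacyc a ha g (haf.tail ⟨ρ, hρ, hroot, hg⟩)
  exact not_strictAnti_of_wellFoundedLT _
    (strictAnti_nat_of_succ_lt (f := fun n => (seq n).eval P.weight) hdecr)
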